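/- arXiv:1901.07649 — 2 statements merged into one kernel-verified Lean document; each statement's English description precedes it below -/
import Mathlib

section
/- Let 𝒜 and ℬ be finite sets, let k assign to each b ∈ ℬ a pmf k_b on 𝒜, and let μ and ν be pmfs on ℬ with V(μ, ν) ≤ v for some 0 < v ≤ 1/2. Then the conditional entropies of the joint distributions obtained by combining μ (respectively ν) with the common conditional kernel k satisfy |Σ_{b∈ℬ} μ(b)·H(k_b) − Σ_{b∈ℬ} ν(b)·H(k_b)| ≤ 2·v·(log(|𝒜|·|ℬ|) − log v). -/
open scoped Classical
open Finset

noncomputable section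

/-- Shannon entropy in bits of a weight function on a finite type
(with the convention `0 * log 0 = 0`, automatic since `Real.logb 2 0 = 0`). -/
def Hent {α : Type*} [Fintype α] (p : α → ℝ) : ℝ :=
  ∑ a, -(p a * Real.logb 2 (p a))

/-- Variational distance between two weight functions on a finite type. -/
def Vd {α : Type*} [Fintype α] (p q : α → ℝ) : ℝ :=
  ∑ a, |p a - q a|

/-- Kullback–Leibler divergence in bits (with the convention `0 * log (0/·) = 0`). -/
def KLd {α : Type*} [Fintype α] (p q : α → ℝ) : ℝ :=
  ∑ a, p a * Real.logb 2 (p a / q a)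

/-- Law (pushforward pmf) of a random variable `X` on a finite weighted space. -/
def law {Ω : Type*} {α : Type*} [Fintype Ω] (μ : Ω → ℝ) (X : Ω → α) : α → ℝ :=
  fun a => ∑ ω, if X ω = a then μ ω else 0

/-- Entropy (bits) of a random variable. -/
def Hrv {Ω α : Type*} [Fintype Ω] [Fintype α] (μ : Ω → ℝ) (X : Ω → α) : ℝ :=
  Hent (law μ X)

/-- Conditional entropy `H(X|Y)` in bits. -/
def Hc {Ω α β : Type*} [Fintype Ω] [Fintype α] [Fintype β] (μ : Ω → ℝ)
    (X : Ω → α) (Y : Ω → β) : ℝ :=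
  Hrv μ (fun ω => (X ω, Y ω)) - Hrv μ Y

/-- Mutual information `I(X;Y)` in bits. -/
def MI {Ω α β : Type*} [Fintype Ω] [Fintype α] [Fintype β] (μ : Ω → ℝ)
    (X : Ω → α) (Y : Ω → β) : ℝ :=
  Hrv μ X + Hrv μ Y - Hrv μ (fun ω => (X ω, Y ω))

/-- Conditional probability `P[X = a | Y = b]` (zero if `P[Y = b] = 0`). -/
def cPr {Ω α β : Type*} [Fintype Ω] (μ : Ω → ℝ) (X : Ω → α) (Y : Ω → β)
    (a : α) (b : β) : ℝ :=
  law μ (fun ω => (X ω, Y ω)) (a, b) / law μ Y b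

/-- `p` is a probability mass function. -/
def IsPMF {α : Type*} [Fintype α] (p : α → ℝ) : Prop :=
  (∀ a, 0 ≤ p a) ∧ ∑ a, p a = 1

lemma pmf_le_one {α : Type*} [Fintype α] {p : α → ℝ} (hp : IsPMF p) (a : α) : p a ≤ 1 := by
  rw [← hp.2]
  exact Finset.single_le_sum (fun i _ => hp.1 i) (Finset.mem_univ a)

lemma Hent_nonneg {α : Type*} [Fintype α] {p : α → ℝ} (hp : IsPMF p) : 0 ≤ Hent p := by
  refine Finset.sum_nonneg fun a _ => ?_
  rw [neg_nonneg]
  exact mul_nonpos_of_nonneg_of_nonpos (hp.1 a)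
    (Real.logb_nonpos (by norm_num) (hp.1 a) (pmf_le_one hp a))

lemma Hent_le_logb_card {α : Type*} [Fintype α] [Nonempty α] {p : α → ℝ} (hp : IsPMF p) :
    Hent p ≤ Real.logb 2 (Fintype.card α) := by
  set n : ℝ := (Fintype.card α : ℝ) with hn
  have hn0 : 0 < n := by
    have := Fintype.card_pos (α := α)
    positivity
  have hlog2 : (0:ℝ) < Real.log 2 := Real.log_pos (by norm_num)
  have key : ∀ a, -(p a * Real.log (p a)) ≤ p a * Real.log n + (1 / n - p a) := by
    intro a
    rcases (hp.1 a).eq_or_lt with h | h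
    · rw [← h]
      simp
      positivity
    · have h1 : Real.log (1 / (n * p a)) ≤ 1 / (n * p a) - 1 :=
        Real.log_le_sub_one_of_pos (by positivity)
      have h2 : Real.log (1 / (n * p a)) = -Real.log n - Real.log (p a) := by
        rw [one_div, Real.log_inv, Real.log_mul (ne_of_gt hn0) (ne_of_gt h)]
        ring
      have h3 : p a * Real.log (1 / (n * p a)) ≤ p a * (1 / (n * p a) - 1) :=
        mul_le_mul_of_nonneg_left h1 (le_of_lt h)
      have h4 : p a * (1 / (n * p a) - 1) = 1 / n - p a := by
        field_simp
      rw [h2] at h3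
      nlinarith
  have hsum : ∑ a, -(p a * Real.log (p a)) ≤ Real.log n := by
    calc ∑ a, -(p a * Real.log (p a))
        ≤ ∑ a, (p a * Real.log n + (1 / n - p a)) :=
          Finset.sum_le_sum fun a _ => key a
      _ = (∑ a, p a) * Real.log n + ((Fintype.card α : ℝ) * (1 / n) - ∑ a, p a) := by
          rw [Finset.sum_add_distrib, ← Finset.sum_mul, Finset.sum_sub_distrib]
          simp [Finset.card_univ, mul_comm]
      _ = Real.log n := by
          rw [hp.2, ← hn]
          field_simp
          ring
  have hHent : Hent p = (∑ a, -(p a * Real.log (p a))) / Real.log 2 := by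
    unfold Hent Real.logb
    rw [Finset.sum_div]
    congr 1; ext a; ring
  rw [hHent, Real.logb]
  exact div_le_div_of_nonneg_right hsum hlog2.le

/-- If `k` assigns to each `b ∈ ℬ` a pmf `k_b` on `𝒜` and `μ, ν` are pmfs
on `ℬ` with `V(μ,ν) ≤ v`, `0 < v ≤ 1/2`, then
`|Σ_b μ(b)·H(k_b) − Σ_b ν(b)·H(k_b)| ≤ 2·v·(log(|𝒜|·|ℬ|) − log v)`. -/
theorem stmt_9 {𝒜 ℬ : Type*} [Fintype 𝒜] [Fintype ℬ]
    (k : ℬ → 𝒜 → ℝ) (hk : ∀ b, IsPMF (k b))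
    (μ ν : ℬ → ℝ) (hμ : IsPMF μ) (hν : IsPMF ν)
    (v : ℝ) (hv0 : 0 < v) (hv : v ≤ 1 / 2) (hV : Vd μ ν ≤ v) :
    |(∑ b, μ b * Hent (k b)) - ∑ b, ν b * Hent (k b)|
      ≤ 2 * v * (Real.logb 2 ((Fintype.card 𝒜 : ℝ) * (Fintype.card ℬ : ℝ))
          - Real.logb 2 v) := by
  have hB : Nonempty ℬ := by
    rcases isEmpty_or_nonempty ℬ with h | h
    · exfalso
      have := hμ.2
      simp [Finset.univ_eq_empty] at this
    · exact h
  have hA : Nonempty 𝒜 := by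
    rcases isEmpty_or_nonempty 𝒜 with h | h
    · exfalso
      obtain ⟨b⟩ := hB
      have := (hk b).2
      simp [Finset.univ_eq_empty] at this
    · exact h
  have hcardA : (1:ℝ) ≤ (Fintype.card 𝒜 : ℝ) := by exact_mod_cast Fintype.card_pos
  have hcardB : (1:ℝ) ≤ (Fintype.card ℬ : ℝ) := by exact_mod_cast Fintype.card_pos
  set L := Real.logb 2 ((Fintype.card 𝒜 : ℝ)) with hLdef
  have hL0 : 0 ≤ L := Real.logb_nonneg (by norm_num) hcardA
  have hHk : ∀ b, 0 ≤ Hent (k b) ∧ Hent (k b) ≤ L := fun b =>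
    ⟨Hent_nonneg (hk b), Hent_le_logb_card (hk b)⟩
  have step1 : |(∑ b, μ b * Hent (k b)) - ∑ b, ν b * Hent (k b)| ≤ v * L := by
    rw [← Finset.sum_sub_distrib]
    calc |∑ b, (μ b * Hent (k b) - ν b * Hent (k b))|
        ≤ ∑ b, |μ b * Hent (k b) - ν b * Hent (k b)| := Finset.abs_sum_le_sum_abs _ _
      _ = ∑ b, |μ b - ν b| * Hent (k b) := by
          refine Finset.sum_congr rfl fun b _ => ?_
          rw [← sub_mul, abs_mul, abs_of_nonneg (hHk b).1]
      _ ≤ ∑ b, |μ b - ν b| * L :=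
          Finset.sum_le_sum fun b _ =>
            mul_le_mul_of_nonneg_left (hHk b).2 (abs_nonneg _)
      _ = Vd μ ν * L := by rw [Vd, Finset.sum_mul]
      _ ≤ v * L := mul_le_mul_of_nonneg_right hV hL0
  have hlogB : 0 ≤ Real.logb 2 ((Fintype.card ℬ : ℝ)) := Real.logb_nonneg (by norm_num) hcardB
  have hlogv : Real.logb 2 v ≤ -1 := by
    have h1 : Real.logb 2 v ≤ Real.logb 2 (1/2) :=
      Real.logb_le_logb_of_le (by norm_num) hv0 hv
    have h2 : Real.logb 2 ((1:ℝ)/2) = -1 := by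
      rw [one_div, Real.logb_inv, Real.logb_self_eq_one] <;> norm_num
    linarith
  have hmul : Real.logb 2 ((Fintype.card 𝒜 : ℝ) * (Fintype.card ℬ : ℝ))
      = L + Real.logb 2 ((Fintype.card ℬ : ℝ)) := by
    rw [Real.logb_mul (by linarith) (by linarith)]
  rw [hmul]
  nlinarith [step1, abs_nonneg ((∑ b, μ b * Hent (k b)) - ∑ b, ν b * Hent (k b))]
end
end

section
/- Let X be a {0,1}-valued random variable and Y a random variable with finite range on a common probability space. For each y with P[Y = y] > 0, let p*(y) = max_{x∈{0,1}} P[X = x | Y = y]. Then Σ_y P[Y = y]·(1 − p*(y))² ≤ H(X | Y), and consequently Σ_y P[Y = y]·(1 − p*(y)) ≤ sqrt(H(X | Y)). (In words: the expected error probability of the maximum a posteriori estimate of X from Y is at most the square root of the conditional entropy of X given Y, in bits.) -/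
open scoped Classical
open Finset

noncomputable section

lemma my_nlog_nonneg {x : ℝ} (h0 : 0 ≤ x) (h1 : x ≤ 1) : 0 ≤ -(x * Real.logb 2 x) := by
  have h := Real.logb_nonpos (b := 2) one_lt_two h0 h1
  nlinarith

lemma my_half_bound {q : ℝ} (h0 : 0 ≤ q) (hh : q ≤ 1/2) : q^2 ≤ -(q * Real.logb 2 q) := by
  rcases eq_or_lt_of_le h0 with h|hq
  · simp [← h]
  · have hlog : Real.logb 2 q ≤ -1 := by
      have h2 : Real.logb 2 q ≤ Real.logb 2 (1/2) := by
        apply Real.logb_le_logb_of_le one_lt_two hq hh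
      have h3 : Real.logb 2 (1/2 : ℝ) = -1 := by
        rw [show (1/2 : ℝ) = 2⁻¹ by norm_num, Real.logb_inv, Real.logb_self_eq_one] <;> norm_num
      linarith
    nlinarith

lemma my_minsq {p : ℝ} (h0 : 0 ≤ p) (h1 : p ≤ 1) :
    (1 - max p (1-p))^2 ≤ -(p * Real.logb 2 p) + -((1-p) * Real.logb 2 (1-p)) := by
  rcases le_total p (1/2) with h|h
  · have hmax : max p (1-p) = 1-p := max_eq_right (by linarith)
    rw [hmax]
    have h1' := my_half_bound h0 h
    have h2' := my_nlog_nonneg (x := 1-p) (by linarith) (by linarith)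
    nlinarith
  · have hmax : max p (1-p) = p := max_eq_left (by linarith)
    rw [hmax]
    have h1' := my_half_bound (q := 1-p) (by linarith) (by linarith)
    have h2' := my_nlog_nonneg h0 h1
    nlinarith

lemma my_key {a b : ℝ} (ha : 0 ≤ a) (hb : 0 ≤ b) :
    (a+b) * (1 - max (a/(a+b)) (b/(a+b)))^2
      ≤ -(a * Real.logb 2 a) + -(b * Real.logb 2 b) + (a+b) * Real.logb 2 (a+b) := by
  rcases eq_or_lt_of_le (by positivity : (0:ℝ) ≤ a + b) with hs|hs
  · have ha0 : a = 0 := by linarith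
    have hb0 : b = 0 := by linarith
    simp [ha0, hb0]
  · set s := a + b with hsdef
    have hp0 : 0 ≤ a / s := by positivity
    have hp1 : a / s ≤ 1 := by
      rw [div_le_one hs]; linarith
    have hbs : b / s = 1 - a / s := by
      field_simp
      ring
    have hid : -(a * Real.logb 2 a) + -(b * Real.logb 2 b) + s * Real.logb 2 s
        = s * (-(a/s * Real.logb 2 (a/s)) + -((1 - a/s) * Real.logb 2 (1 - a/s))) := by
      rcases eq_or_lt_of_le ha with ha0|ha0
      · have hA : a = 0 := ha0.symm
        subst hA
        simp [hsdef]
      · rcases eq_or_lt_of_le hb with hb0|hb0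
        · have hB : b = 0 := hb0.symm
          subst hB
          have h1 : a / s = 1 := by rw [hsdef]; field_simp; ring
          rw [h1]
          simp [hsdef]
        · rw [← hbs, Real.logb_div ha0.ne' hs.ne', Real.logb_div hb0.ne' hs.ne']
          have hss : s = a + b := hsdef
          field_simp
          ring
    rw [hid, hbs]
    apply mul_le_mul_of_nonneg_left (my_minsq hp0 hp1) hs.le

lemma my_law_nonneg {Ω α : Type*} [Fintype Ω] {μ : Ω → ℝ} (hμ : ∀ ω, 0 ≤ μ ω)
    (Z : Ω → α) (z : α) : 0 ≤ law μ Z z := by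
  apply Finset.sum_nonneg
  intro ω _
  split
  · exact hμ ω
  · exact le_refl 0

lemma my_marg {Ω γ : Type*} [Fintype Ω] [Fintype γ] (μ : Ω → ℝ) (X : Ω → Bool)
    (Y : Ω → γ) (y : γ) :
    law μ (fun ω => (X ω, Y ω)) (true, y) + law μ (fun ω => (X ω, Y ω)) (false, y)
      = law μ Y y := by
  unfold law
  rw [← Finset.sum_add_distrib]
  apply Finset.sum_congr rfl
  intro ω _
  by_cases hx : X ω = true <;> by_cases hy : Y ω = y <;>
    simp [hx, hy, Prod.ext_iff] <;> simp_all


/-- For a `{0,1}`-valued `X` and finite-range `Y`, with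
`p*(y) = max_{x} P[X = x | Y = y]`, one has
`Σ_y P[Y=y]·(1 − p*(y))² ≤ H(X|Y)` and `Σ_y P[Y=y]·(1 − p*(y)) ≤ sqrt(H(X|Y))`. -/
theorem stmt_10 {Ω : Type*} [Fintype Ω] {γ : Type*} [Fintype γ]
    (μ : Ω → ℝ) (hμ : IsPMF μ) (X : Ω → Bool) (Y : Ω → γ) :
    (∑ y, law μ Y y * (1 - max (cPr μ X Y true y) (cPr μ X Y false y)) ^ 2
        ≤ Hc μ X Y) ∧
    (∑ y, law μ Y y * (1 - max (cPr μ X Y true y) (cPr μ X Y false y))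
        ≤ Real.sqrt (Hc μ X Y)) := by

  obtain ⟨hμ0, hμ1⟩ := hμ
  set XY : Ω → Bool × γ := fun ω => (X ω, Y ω) with hXY
  set A : γ → ℝ := fun y => law μ XY (true, y) with hA
  set B : γ → ℝ := fun y => law μ XY (false, y) with hB
  set S : γ → ℝ := fun y => law μ Y y with hS
  have hmarg : ∀ y, A y + B y = S y := fun y => my_marg μ X Y y
  have hAnn : ∀ y, 0 ≤ A y := fun y => my_law_nonneg hμ0 XY (true, y)
  have hBnn : ∀ y, 0 ≤ B y := fun y => my_law_nonneg hμ0 XY (false, y)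
  have hSnn : ∀ y, 0 ≤ S y := fun y => my_law_nonneg hμ0 Y y
  have hcPr : ∀ y, cPr μ X Y true y = A y / S y ∧ cPr μ X Y false y = B y / S y :=
    fun y => ⟨rfl, rfl⟩
  have hchain : Hc μ X Y = ∑ y, (-(A y * Real.logb 2 (A y)) + -(B y * Real.logb 2 (B y))
      + S y * Real.logb 2 (S y)) := by
    unfold Hc Hrv Hent
    rw [Fintype.sum_prod_type]
    rw [Fintype.sum_bool]
    rw [← Finset.sum_add_distrib]
    rw [← Finset.sum_sub_distrib]
    apply Finset.sum_congr rfl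
    intro y _
    simp only [hA, hB, hS, hXY]
    ring
  have hmy : ∀ y, 0 ≤ 1 - max (cPr μ X Y true y) (cPr μ X Y false y) ∧
      S y * (1 - max (cPr μ X Y true y) (cPr μ X Y false y))^2
        ≤ -(A y * Real.logb 2 (A y)) + -(B y * Real.logb 2 (B y))
          + S y * Real.logb 2 (S y) := by
    intro y
    rcases eq_or_lt_of_le (hSnn y) with hs0|hs0
    · have hA0 : A y = 0 := by have := hmarg y; have := hAnn y; have := hBnn y; linarith
      have hB0 : B y = 0 := by have := hmarg y; have := hAnn y; have := hBnn y; linarith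
      constructor
      · rw [(hcPr y).1, (hcPr y).2, hA0, hB0]
        simp
      · rw [hA0, hB0, ← hs0]
        simp
    · constructor
      · rw [(hcPr y).1, (hcPr y).2]
        have h1 : A y / S y ≤ 1 := by
          rw [div_le_one hs0]; have := hmarg y; have := hBnn y; linarith
        have h2 : B y / S y ≤ 1 := by
          rw [div_le_one hs0]; have := hmarg y; have := hAnn y; linarith
        simp only [sub_nonneg, max_le_iff]
        exact ⟨h1, h2⟩
      · rw [(hcPr y).1, (hcPr y).2, ← hmarg y]
        exact my_key (hAnn y) (hBnn y)
  have part1 : ∑ y, S y * (1 - max (cPr μ X Y true y) (cPr μ X Y false y)) ^ 2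
      ≤ Hc μ X Y := by
    rw [hchain]
    exact Finset.sum_le_sum (fun y _ => (hmy y).2)
  refine ⟨part1, ?_⟩
  -- part 2
  have hsum1 : ∑ y, S y = 1 := by
    simp only [hS]
    unfold law
    rw [Finset.sum_comm]
    rw [← hμ1]
    apply Finset.sum_congr rfl
    intro ω _
    simp
  set m : γ → ℝ := fun y => 1 - max (cPr μ X Y true y) (cPr μ X Y false y) with hm
  have hCS : (∑ y, S y * m y) ^ 2 ≤ ∑ y, S y * (m y)^2 := by
    have h := Finset.sum_mul_sq_le_sq_mul_sq Finset.univ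
      (fun y => Real.sqrt (S y)) (fun y => Real.sqrt (S y) * m y)
    have e1 : ∀ y : γ, Real.sqrt (S y) * (Real.sqrt (S y) * m y) = S y * m y := by
      intro y; rw [← mul_assoc, Real.mul_self_sqrt (hSnn y)]
    have e2 : ∀ y : γ, Real.sqrt (S y) ^ 2 = S y := fun y => Real.sq_sqrt (hSnn y)
    have e3 : ∀ y : γ, (Real.sqrt (S y) * m y) ^ 2 = S y * (m y)^2 := by
      intro y; rw [mul_pow, e2 y]
    simp only [e1, e2, e3] at h
    rw [hsum1, one_mul] at h
    exact h
  have hnn : 0 ≤ ∑ y, S y * m y := by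
    apply Finset.sum_nonneg
    intro y _
    exact mul_nonneg (hSnn y) (hmy y).1
  have hle : (∑ y, S y * m y) ^ 2 ≤ Hc μ X Y := le_trans hCS part1
  calc ∑ y, S y * m y = Real.sqrt ((∑ y, S y * m y)^2) := (Real.sqrt_sq hnn).symm
    _ ≤ Real.sqrt (Hc μ X Y) := Real.sqrt_le_sqrt hle
end
end
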